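/- arXiv:2508.14639 — 4 statements merged into one kernel-verified Lean document; each statement's English description precedes it below -/
import Mathlib

section
/- Fix n ≥ 1. For every permutation t of Fin (n+1) and every i ∈ Fin (n+1), sign(φ_i(t)) = (−1)^{i + t(i)} · sign(t), where i and t(i) are read as natural numbers and sign denotes the sign of a permutation. -/
/-!
Conjugating by the cycles `cycleRange i` and `cycleRange (t i)`, which move `i` and `t i` to `0`
and have signs `(-1)^i` and `(-1)^(t i)`, turns `t` into a permutation fixing `0` that acts as
`φ_i t` on the remaining points, so its sign is `sign (φ_i t)`.
-/

open Equiv Fin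

theorem Fin.cycleRange_mul_mul_cycleRange_inv_eq_decomposeFin_symm {n : ℕ}
    (t : Perm (Fin (n + 1))) (i : Fin (n + 1)) (u : Perm (Fin n))
    (hu : ∀ j, t (i.succAbove j) = (t i).succAbove (u j)) :
    cycleRange (t i) * t * (cycleRange i)⁻¹ = Perm.decomposeFin.symm (0, u) := by
  ext x
  induction x using Fin.cases with
  | zero => simp
  | succ j => simp [hu]

theorem Equiv.Perm.sign_eq_of_succAbove_comp {n : ℕ} (t : Perm (Fin (n + 1))) (i : Fin (n + 1))
    (u : Perm (Fin n)) (hu : succAbove (t i) ∘ u = t ∘ succAbove i) :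
    sign u = (-1) ^ ((i : ℕ) + (t i : ℕ)) * sign t := by
  have hconj := congrArg sign <|
    cycleRange_mul_mul_cycleRange_inv_eq_decomposeFin_symm t i u fun j => (congrFun hu j).symm
  simp only [map_mul, map_inv, sign_cycleRange, Perm.decomposeFin.symm_sign, if_pos,
    one_mul] at hconj
  rw [← hconj, Int.units_inv_eq_self, pow_add]
  ac_rfl

theorem stmt2_general (n : ℕ)
    (φ : Fin (n + 1) → Equiv.Perm (Fin (n + 1)) → Equiv.Perm (Fin n))
    (hφ : ∀ (i : Fin (n + 1)) (t : Equiv.Perm (Fin (n + 1))),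
      (Fin.succAbove (t i)) ∘ (φ i t : Fin n → Fin n) =
        (t : Fin (n + 1) → Fin (n + 1)) ∘ (Fin.succAbove i))
    (t : Equiv.Perm (Fin (n + 1))) (i : Fin (n + 1)) :
    Equiv.Perm.sign (φ i t) = (-1) ^ ((i : ℕ) + ((t i : Fin (n + 1)) : ℕ)) * Equiv.Perm.sign t :=
  Equiv.Perm.sign_eq_of_succAbove_comp t i (φ i t) (hφ i t)

/-- `sign (φ_i t) = (-1)^(i + t i) * sign t`, where `φ_i t` is the permutation of `Fin n`
characterized by `succAbove (t i) ∘ φ_i t = t ∘ succAbove i`. -/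
theorem stmt2 (n : ℕ) (hn : 1 ≤ n)
    (φ : Fin (n + 1) → Equiv.Perm (Fin (n + 1)) → Equiv.Perm (Fin n))
    (hφ : ∀ (i : Fin (n + 1)) (t : Equiv.Perm (Fin (n + 1))),
      (Fin.succAbove (t i)) ∘ (φ i t : Fin n → Fin n) =
        (t : Fin (n + 1) → Fin (n + 1)) ∘ (Fin.succAbove i))
    (t : Equiv.Perm (Fin (n + 1))) (i : Fin (n + 1)) :
    Equiv.Perm.sign (φ i t) = (-1) ^ ((i : ℕ) + ((t i : Fin (n + 1)) : ℕ)) * Equiv.Perm.sign t :=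
  stmt2_general n φ hφ t i
end

section
/- Let R be a field of characteristic 0 and X a symmetric simplicial R-module. For all 0 < k ≤ n, ∂_n ∘ p_n^(k) = p_{n−1}^(k−1) ∘ ∂_n^{≤k} + p_{n−1}^(k) ∘ ∂_n^{>k} as R-linear maps X_n → X_{n−1}. In particular ∂_n ∘ p_n^(n) = p_{n−1}^(n−1) ∘ ∂_n for all n, so the family p_X := (p_n^(n)) is a chain map C_*X → C_*X. -/
open CategoryTheory Opposite
noncomputable section
variable {R : Type} [Field R] [CharZero R]

/-- The object `Fin m` in the category of finite types. -/
abbrev fobj (m : ℕ) : FintypeCat := FintypeCat.of (Fin m)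

variable (X : FintypeCatᵒᵖ ⥤ ModuleCat R)

/-- The `R`-module `X(Fin m)`; for `m = n+1` this is the module `X_n` of `n`-simplices. -/
abbrev MM (m : ℕ) := X.obj (op (fobj m))

/-- `X` applied (contravariantly) to a map `f : Fin m → Fin k`. -/
def act {m k : ℕ} (f : Fin m → Fin k) : MM X k →ₗ[R] MM X m :=
  (X.map (Quiver.Hom.op (show fobj m ⟶ fobj k from FintypeCat.homMk f))).hom

/-- The face map `d_i : X_n → X_{n-1}`, i.e. `X` applied to `Fin.succAbove i`. -/
def face (n : ℕ) (i : Fin (n + 1)) : MM X (n + 1) →ₗ[R] MM X n :=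
  act X (Fin.succAbove i)

/-- The alternating-sum differential `∂_n : X_n → X_{n-1}`. -/
def del (n : ℕ) : MM X (n + 1) →ₗ[R] MM X n :=
  ∑ i : Fin (n + 1), ((-1 : R) ^ (i : ℕ)) • face X n i

/-- The action of a permutation `t` on `X_n`, `t • x := X(t)(x)`. -/
def pact (m : ℕ) (t : Equiv.Perm (Fin m)) : MM X m →ₗ[R] MM X m :=
  act X (t : Fin m → Fin m)

/-- The sign of a permutation, as an element of `R`. -/
def sgnR (R : Type) [Field R] {m : ℕ} (t : Equiv.Perm (Fin m)) : R := ((Equiv.Perm.sign t : ℤ) : R)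

/-- The subgroup `S_{[k]}` of permutations of `Fin m` fixing every `j > k`, as a finset. -/
def Sk (m k : ℕ) : Finset (Equiv.Perm (Fin m)) :=
  Finset.univ.filter (fun t => ∀ j : Fin m, k < (j : ℕ) → t j = j)

/-- The map `p_{m-1}^{(k)} : X(Fin m) → X(Fin m)`,
`x ↦ (1/(k+1)!) ∑_{t ∈ S_{[k]}} sgn(t) • (t • x)`. -/
def pmap (m k : ℕ) : MM X m →ₗ[R] MM X m :=
  ((Nat.factorial (k + 1) : R)⁻¹) • ∑ t ∈ Sk m k, sgnR R t • pact X m t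

/-- Truncated differential `∂_n^{≤ k} = ∑_{i=0}^k (-1)^i d_i`. -/
def delLe (n k : ℕ) : MM X (n + 1) →ₗ[R] MM X n :=
  ∑ i ∈ Finset.univ.filter (fun i : Fin (n + 1) => (i : ℕ) ≤ k),
    ((-1 : R) ^ (i : ℕ)) • face X n i

/-- Truncated differential `∂_n^{> k} = ∑_{i=k+1}^n (-1)^i d_i`. -/
def delGt (n k : ℕ) : MM X (n + 1) →ₗ[R] MM X n :=
  ∑ i ∈ Finset.univ.filter (fun i : Fin (n + 1) => k < (i : ℕ)),
    ((-1 : R) ^ (i : ℕ)) • face X n i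

/-- The full projection `p_{m-1}^{(m-1)} : X(Fin m) → X(Fin m)` (averaging over all of
`Perm (Fin m)` with signs). -/
def pfull (m : ℕ) : MM X m →ₗ[R] MM X m :=
  ((Nat.factorial m : R)⁻¹) • ∑ t : Equiv.Perm (Fin m), sgnR R t • pact X m t

end

/-! For a face `δ_i` and a permutation `t` of `Fin (n + 1)` one has
`t ∘ δ_i = δ_{t i} ∘ e` for a unique permutation `e` of `Fin n` (`removeNth i t`), of sign
`(-1)^(i + t i) sgn t`; hence `d_i ∘ t = e ∘ d_{t i}` and the signs of the two sides agree.
For `i ≤ k`, `t ↦ (t i, e)` is a bijection from `S_{[k]}` onto `{j ≤ k} × S_{[k-1]}`, and for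
`i > k` (where `t i = i`), `t ↦ e` is a bijection `S_{[k]} ≃ S_{[k]}`. So each of the `k + 1`
faces `i ≤ k` of `∂ ∘ p^(k)` reproduces all of `p^(k-1) ∘ ∂^{≤k}`, which turns `1/(k+1)!` into
`1/k!`, while the faces `i > k` give `p^(k) ∘ ∂^{>k}`. For `k = n` this is the chain-map identity.
-/

namespace Fin

variable {n k : ℕ} {i : Fin (n + 1)}

lemma lt_val_succAbove_iff_of_le (hi : (i : ℕ) ≤ k) (m : Fin n) :
    k < (i.succAbove m : ℕ) ↔ k ≤ m := by
  rcases lt_or_ge m.castSucc i with h | h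
  · rw [succAbove_of_castSucc_lt _ _ h]; simp only [lt_def, val_castSucc] at h ⊢; omega
  · rw [succAbove_of_le_castSucc _ _ h, val_succ]; omega

lemma lt_val_succAbove_iff_of_lt (hi : k < (i : ℕ)) (m : Fin n) :
    k < (i.succAbove m : ℕ) ↔ k < m := by
  rcases lt_or_ge m.castSucc i with h | h
  · rw [succAbove_of_castSucc_lt _ _ h, val_castSucc]
  · rw [succAbove_of_le_castSucc _ _ h, val_succ]; simp only [le_def, val_castSucc] at h; omega

lemma card_filter_val_le (hkn : k ≤ n) :
    (Finset.univ.filter (fun i : Fin (n + 1) => (i : ℕ) ≤ k)).card = k + 1 := by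
  simpa [Nat.lt_succ_iff, hkn] using Fin.card_filter_val_lt (n := n + 1) (m := k + 1)

end Fin

namespace Equiv.Perm

open Fin

variable {n : ℕ}

/-- The permutation `e` with `t ∘ i.succAbove = (t i).succAbove ∘ e` (`apply_succAbove`):
conjugating by `Fin.cycleRange` moves `i` and `t i` to `0`, and `e` is what remains. -/
def removeNth (i : Fin (n + 1)) (t : Perm (Fin (n + 1))) : Perm (Fin n) :=
  (decomposeFin ((t i).cycleRange * t * i.cycleRange⁻¹)).2

def insertNth (i j : Fin (n + 1)) (e : Perm (Fin n)) : Perm (Fin (n + 1)) :=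
  j.cycleRange⁻¹ * decomposeFin.symm (0, e) * i.cycleRange

lemma cycleRange_mul_mul_inv_eq (i : Fin (n + 1)) (t : Perm (Fin (n + 1))) :
    (t i).cycleRange * t * i.cycleRange⁻¹ = decomposeFin.symm (0, removeNth i t) := by
  set u := (t i).cycleRange * t * i.cycleRange⁻¹
  have hu : (decomposeFin u).1 = 0 := by
    have h := decomposeFin_symm_apply_zero (decomposeFin u).1 (decomposeFin u).2
    rw [Prod.mk.eta, symm_apply_apply] at h
    rw [← h]
    simp [u, mul_apply, inv_def]
  rw [← hu]
  exact (decomposeFin.symm_apply_apply u).symm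

lemma insertNth_apply_self (i j : Fin (n + 1)) (e : Perm (Fin n)) : insertNth i j e i = j := by
  simp [insertNth, mul_apply, inv_def]

lemma removeNth_insertNth (i j : Fin (n + 1)) (e : Perm (Fin n)) :
    removeNth i (insertNth i j e) = e := by
  rw [removeNth, insertNth_apply_self, insertNth]
  simp [mul_assoc]

lemma insertNth_removeNth (i : Fin (n + 1)) (t : Perm (Fin (n + 1))) :
    insertNth i (t i) (removeNth i t) = t := by
  rw [insertNth, ← cycleRange_mul_mul_inv_eq]
  group

lemma apply_succAbove (i : Fin (n + 1)) (t : Perm (Fin (n + 1))) (m : Fin n) :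
    t (i.succAbove m) = (t i).succAbove (removeNth i t m) := by
  have h := congrArg (· m.succ) (cycleRange_mul_mul_inv_eq i t)
  simp only [mul_apply, inv_def, cycleRange_symm_succ, decomposeFin_symm_apply_succ,
    swap_self, refl_apply] at h
  simpa using congrArg (t i).cycleRange.symm h

lemma sign_removeNth (i : Fin (n + 1)) (t : Perm (Fin (n + 1))) :
    sign (removeNth i t) = (-1) ^ ((i : ℕ) + (t i : ℕ)) * sign t := by
  have h := congrArg sign (cycleRange_mul_mul_inv_eq i t)
  simp only [decomposeFin.symm_sign, if_pos, map_mul, map_inv, sign_cycleRange, one_mul] at h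
  rw [← h, pow_add, Int.units_inv_eq_self]
  ac_rfl

lemma removeNth_apply_eq_self_iff {i : Fin (n + 1)} {t : Perm (Fin (n + 1))} {m : Fin n}
    (h : (t i).succAbove m = i.succAbove m) :
    removeNth i t m = m ↔ t (i.succAbove m) = i.succAbove m := by
  rw [apply_succAbove, ← h, succAbove_right_injective.eq_iff]

def decomposeAt (i : Fin (n + 1)) : Perm (Fin (n + 1)) ≃ Fin (n + 1) × Perm (Fin n) where
  toFun t := (t i, removeNth i t)
  invFun p := insertNth i p.1 p.2
  left_inv := insertNth_removeNth i
  right_inv p := Prod.ext (insertNth_apply_self i p.1 p.2) (removeNth_insertNth i p.1 p.2)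

end Equiv.Perm

section SymmetricSubgroup

open Equiv Perm

variable {n k : ℕ}

lemma mem_Sk {m : ℕ} {t : Perm (Fin m)} : t ∈ Sk m k ↔ ∀ j : Fin m, k < (j : ℕ) → t j = j := by
  simp [Sk]

lemma val_apply_le_of_mem_Sk {m : ℕ} {t : Perm (Fin m)} (ht : t ∈ Sk m k) {i : Fin m}
    (hi : (i : ℕ) ≤ k) : (t i : ℕ) ≤ k := by
  by_contra h
  have hti : t i = i := t.injective (mem_Sk.1 ht (t i) (by omega))
  rw [hti] at h
  omega

lemma mem_Sk_succ_iff_of_le (hk : 0 < k) {i : Fin (n + 1)} (hi : (i : ℕ) ≤ k)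
    {t : Perm (Fin (n + 1))} :
    t ∈ Sk (n + 1) k ↔ (t i : ℕ) ≤ k ∧ removeNth i t ∈ Sk n (k - 1) := by
  suffices key : (t i : ℕ) ≤ k → (t ∈ Sk (n + 1) k ↔ removeNth i t ∈ Sk n (k - 1)) from
    ⟨fun ht => ⟨val_apply_le_of_mem_Sk ht hi, (key (val_apply_le_of_mem_Sk ht hi)).1 ht⟩,
      fun ⟨hti, he⟩ => (key hti).2 he⟩
  intro hti
  rw [mem_Sk, mem_Sk, Fin.forall_iff_succAbove i]
  simp only [show ¬k < (i : ℕ) by omega, false_implies, true_and]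
  refine forall_congr' fun m => imp_congr_ctx (by rw [Fin.lt_val_succAbove_iff_of_le hi]; omega)
    fun hm => (removeNth_apply_eq_self_iff ?_).symm
  rw [Fin.succAbove_of_le_castSucc _ _ (by rw [Fin.le_def, Fin.val_castSucc]; omega),
    Fin.succAbove_of_le_castSucc _ _ (by rw [Fin.le_def, Fin.val_castSucc]; omega)]

lemma mem_Sk_succ_iff_of_lt {i : Fin (n + 1)} (hi : k < (i : ℕ)) {t : Perm (Fin (n + 1))} :
    t ∈ Sk (n + 1) k ↔ t i = i ∧ removeNth i t ∈ Sk n k := by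
  rw [mem_Sk, mem_Sk, Fin.forall_iff_succAbove i]
  simp only [hi, true_implies]
  refine and_congr_right fun hti => forall_congr' fun m => ?_
  rw [Fin.lt_val_succAbove_iff_of_lt hi, removeNth_apply_eq_self_iff (by rw [hti])]

variable {M : Type*} [AddCommMonoid M] (F : Fin (n + 1) → Perm (Fin n) → M)

lemma sum_Sk_succ_of_le (hk : 0 < k) {i : Fin (n + 1)} (hi : (i : ℕ) ≤ k) :
    ∑ t ∈ Sk (n + 1) k, F (t i) (removeNth i t) =
      ∑ j ∈ Finset.univ.filter (fun j : Fin (n + 1) => (j : ℕ) ≤ k), ∑ e ∈ Sk n (k - 1), F j e := by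
  rw [← Finset.sum_product']
  exact Finset.sum_equiv (decomposeAt i)
    (fun t => by simp [mem_Sk_succ_iff_of_le hk hi, decomposeAt]) fun _ _ => rfl

lemma sum_Sk_succ_of_lt {i : Fin (n + 1)} (hi : k < (i : ℕ)) :
    ∑ t ∈ Sk (n + 1) k, F (t i) (removeNth i t) = ∑ e ∈ Sk n k, F i e := by
  rw [← Finset.sum_singleton (fun j => ∑ e ∈ Sk n k, F j e) i, ← Finset.sum_product']
  exact Finset.sum_equiv (decomposeAt i)
    (fun t => by simp [mem_Sk_succ_iff_of_lt hi, decomposeAt, eq_comm, and_comm]) fun _ _ => rfl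

end SymmetricSubgroup

section SymmetricSimplicialModule

open Equiv Perm

variable {R : Type} [Field R] (X : FintypeCatᵒᵖ ⥤ ModuleCat R)

lemma act_comp_act {m k l : ℕ} (f : Fin m → Fin k) (g : Fin k → Fin l) :
    act X f ∘ₗ act X g = act X (g ∘ f) := by
  rw [act, act, act, ← ModuleCat.hom_comp, ← X.map_comp]
  rfl

lemma pact_one (m : ℕ) : pact X m 1 = LinearMap.id := by
  rw [pact, act, ← ModuleCat.hom_id, ← X.map_id]
  rfl

lemma face_comp_pact (n : ℕ) (i : Fin (n + 1)) (t : Perm (Fin (n + 1))) :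
    face X n i ∘ₗ pact X (n + 1) t = pact X n (removeNth i t) ∘ₗ face X n (t i) := by
  simp only [face, pact, act_comp_act]
  congr 1
  funext m
  exact apply_succAbove i t m

lemma sgnR_removeNth {n : ℕ} (i : Fin (n + 1)) (t : Perm (Fin (n + 1))) :
    sgnR R (removeNth i t) = (-1) ^ ((i : ℕ) + (t i : ℕ)) * sgnR R t := by
  simp [sgnR, sign_removeNth]

def signedPermFace (n : ℕ) (j : Fin (n + 1)) (e : Perm (Fin n)) : MM X (n + 1) →ₗ[R] MM X n :=
  ((-1 : R) ^ (j : ℕ) * sgnR R e) • (pact X n e ∘ₗ face X n j)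

lemma smul_face_comp_pact (n : ℕ) (i : Fin (n + 1)) (t : Perm (Fin (n + 1))) :
    ((-1 : R) ^ (i : ℕ) * sgnR R t) • (face X n i ∘ₗ pact X (n + 1) t) =
      signedPermFace X n (t i) (removeNth i t) := by
  have h : (-1 : R) ^ (t i : ℕ) * (-1) ^ (t i : ℕ) = 1 := by rw [← mul_pow]; simp
  rw [signedPermFace, face_comp_pact, sgnR_removeNth, pow_add]
  congr 1
  linear_combination (-(-1 : R) ^ (i : ℕ) * sgnR R t) * h

lemma del_comp_pmap_eq_sum (n k : ℕ) :
    del X n ∘ₗ pmap X (n + 1) k = ((k + 1).factorial : R)⁻¹ •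
      ∑ i, ∑ t ∈ Sk (n + 1) k, signedPermFace X n (t i) (removeNth i t) := by
  ext x
  simp only [del, pmap, ← smul_face_comp_pact, LinearMap.comp_apply, LinearMap.sum_apply,
    LinearMap.smul_apply, map_sum, map_smul, Finset.smul_sum, smul_smul]
  rw [Finset.sum_comm]
  exact Finset.sum_congr rfl fun _ _ => Finset.sum_congr rfl fun _ _ => by congr 1; ring

lemma pmap_comp_sum_face (n k : ℕ) (s : Finset (Fin (n + 1))) :
    pmap X n k ∘ₗ ∑ j ∈ s, ((-1 : R) ^ (j : ℕ)) • face X n j = ((k + 1).factorial : R)⁻¹ •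
      ∑ j ∈ s, ∑ e ∈ Sk n k, signedPermFace X n j e := by
  ext x
  simp only [signedPermFace, pmap, LinearMap.comp_apply, LinearMap.sum_apply,
    LinearMap.smul_apply, map_sum, map_smul, Finset.smul_sum, smul_smul]
  exact Finset.sum_congr rfl fun _ _ => Finset.sum_congr rfl fun _ _ => by congr 1; ring

theorem del_comp_pmap [CharZero R] {n k : ℕ} (hk : 0 < k) (hkn : k ≤ n) :
    del X n ∘ₗ pmap X (n + 1) k =
      pmap X n (k - 1) ∘ₗ delLe X n k + pmap X n k ∘ₗ delGt X n k := by
  rw [del_comp_pmap_eq_sum, delLe, delGt, pmap_comp_sum_face, pmap_comp_sum_face,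
    Nat.sub_add_cancel hk,
    ← Finset.sum_filter_add_sum_filter_not _ (fun i : Fin (n + 1) => (i : ℕ) ≤ k)]
  have hle : ∑ i ∈ Finset.univ.filter (fun i : Fin (n + 1) => (i : ℕ) ≤ k),
      ∑ t ∈ Sk (n + 1) k, signedPermFace X n (t i) (removeNth i t) =
      (k + 1) • ∑ j ∈ Finset.univ.filter (fun j : Fin (n + 1) => (j : ℕ) ≤ k),
        ∑ e ∈ Sk n (k - 1), signedPermFace X n j e := by
    rw [← Fin.card_filter_val_le hkn, ← Finset.sum_const]
    exact Finset.sum_congr rfl fun i hi => sum_Sk_succ_of_le _ hk (Finset.mem_filter.1 hi).2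
  have hgt : ∑ i ∈ Finset.univ.filter (fun i : Fin (n + 1) => ¬(i : ℕ) ≤ k),
      ∑ t ∈ Sk (n + 1) k, signedPermFace X n (t i) (removeNth i t) =
      ∑ j ∈ Finset.univ.filter (fun j : Fin (n + 1) => k < (j : ℕ)),
        ∑ e ∈ Sk n k, signedPermFace X n j e := by
    simp only [not_le]
    exact Finset.sum_congr rfl fun i hi => sum_Sk_succ_of_lt _ (Finset.mem_filter.1 hi).2
  rw [hle, hgt, smul_add, ← Nat.cast_smul_eq_nsmul R, smul_smul]
  congr 2
  rw [Nat.factorial_succ, Nat.cast_mul, mul_inv, mul_right_comm,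
    inv_mul_cancel₀ (Nat.cast_ne_zero.2 k.succ_ne_zero), one_mul]

lemma pfull_eq_pmap (m : ℕ) : pfull X m = pmap X m (m - 1) := by
  have hSk : Sk m (m - 1) = Finset.univ :=
    Finset.filter_true_of_mem fun t _ j hj => absurd j.isLt (by omega)
  rw [pfull, pmap, hSk]
  rcases m with _ | m <;> simp

lemma pfull_of_le_one {m : ℕ} (hm : m ≤ 1) : pfull X m = LinearMap.id := by
  have := Fin.subsingleton_iff_le_one.2 hm
  rw [pfull, Finset.univ_unique, Finset.sum_singleton, Nat.factorial_eq_one.2 hm]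
  simp [sgnR, pact_one]

lemma delLe_self (n : ℕ) : delLe X n n = del X n :=
  Finset.sum_congr (Finset.filter_true_of_mem fun i _ => Nat.le_of_lt_succ i.isLt) fun _ _ => rfl

lemma delGt_self (n : ℕ) : delGt X n n = 0 := by
  rw [delGt, Finset.filter_false_of_mem fun i _ => not_lt.2 (Nat.le_of_lt_succ i.isLt),
    Finset.sum_empty]

end SymmetricSimplicialModule

theorem stmt4 {R : Type} [Field R] [CharZero R] (X : FintypeCatᵒᵖ ⥤ ModuleCat R) :
    (∀ n k : ℕ, 0 < k → k ≤ n →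
      (del X n) ∘ₗ (pmap X (n + 1) k) =
        (pmap X n (k - 1)) ∘ₗ (delLe X n k) + (pmap X n k) ∘ₗ (delGt X n k)) ∧
    (∀ n : ℕ, (del X n) ∘ₗ (pfull X (n + 1)) = (pfull X n) ∘ₗ (del X n)) := by
  refine ⟨fun n k hk hkn => del_comp_pmap X hk hkn, fun n => ?_⟩
  rcases Nat.eq_zero_or_pos n with rfl | hn
  · rw [pfull_of_le_one X le_rfl, pfull_of_le_one X zero_le_one, LinearMap.comp_id,
      LinearMap.id_comp]
  · simpa [pfull_eq_pmap, delLe_self, delGt_self] using del_comp_pmap X hn le_rfl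
end

section
/- Let R be a field of characteristic 0 and X a symmetric simplicial R-module. Then for every n: (i) ∂_n maps sDeg_nX into sDeg_{n−1}X, so sDeg_*X is a subcomplex of C_*X; (ii) p_n^(n) is idempotent, its kernel equals sDeg_nX, and its image equals P_nX := the R-span of { Σ_{t ∈ Perm(Fin (n+1))} sgn(t)·(t·x) : x ∈ X_n }; (iii) C_nX = sDeg_nX ⊕ P_nX, and both summands are invariant under the Perm(Fin (n+1))-action; in particular the short exact sequence of chain complexes 0 → sDeg_*X → C_*X → P_*X → 0 (with surjection p_X) splits via the inclusion P_*X ↪ C_*X. -/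
/-!
The signed sum `A = ∑ₜ sgn(t) • t` satisfies `A ∘ s = s ∘ A = sgn(s) • A`, so in characteristic 0
`pfull = A / m!` is idempotent; its kernel is `sDeg`, because `x - pfull x` is the average of the
generators `x - sgn(t) • t x`, and its range is `P`.

For (i) it suffices that `pfull ∘ ∂ ∘ t = sgn(t) • pfull ∘ ∂`, and since adjacent transpositions
generate the symmetric group it is enough to take `t = (j j+1)`. This `t` exchanges the faces
`d_j` and `d_{j+1}`, which carry opposite signs in `∂`, while for every other `i` it moves past
`d_i` as a transposition of `Fin n`, which `pfull` turns into the sign `-1`.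
-/

open CategoryTheory Opposite
noncomputable section
variable {R : Type} [Field R] [CharZero R]

variable (X : FintypeCatᵒᵖ ⥤ ModuleCat R)

/-- The symmetry submodule `sDeg`, spanned by all `x - sgn(t) • (t • x)`. -/
def sDeg (m : ℕ) : Submodule R (MM X m) :=
  Submodule.span R
    {y | ∃ (x : MM X m) (t : Equiv.Perm (Fin m)), y = x - sgnR R t • pact X m t x}

/-- The submodule `P`, spanned by all `∑_t sgn(t) • (t • x)`. -/
def Psub (m : ℕ) : Submodule R (MM X m) :=
  Submodule.span R
    {y | ∃ x : MM X m, y = ∑ t : Equiv.Perm (Fin m), sgnR R t • pact X m t x}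

end

open Nat

section Sign

variable {R : Type} [Field R] {m : ℕ}

lemma sgnR_one : sgnR R (1 : Equiv.Perm (Fin m)) = 1 := by
  simp [sgnR]

lemma sgnR_mul (t s : Equiv.Perm (Fin m)) : sgnR R (t * s) = sgnR R t * sgnR R s := by
  simp [sgnR]

lemma sgnR_mul_self (t : Equiv.Perm (Fin m)) : sgnR R t * sgnR R t = 1 := by
  rw [← sgnR_mul, sgnR, Equiv.Perm.sign_mul, Int.units_mul_self, Units.val_one, Int.cast_one]

lemma sgnR_swap {a b : Fin m} (h : a ≠ b) : sgnR R (Equiv.swap a b) = -1 := by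
  simp [sgnR, Equiv.Perm.sign_swap h]

end Sign

lemma factorial_cast_ne_zero (R : Type) [Field R] [CharZero R] (m : ℕ) : (m ! : R) ≠ 0 :=
  Nat.cast_ne_zero.mpr m.factorial_ne_zero

section Projection

variable {R : Type} [Field R] (X : FintypeCatᵒᵖ ⥤ ModuleCat R)

lemma act_comp {m k l : ℕ} (f : Fin m → Fin k) (g : Fin k → Fin l) :
    act X (g ∘ f) = act X f ∘ₗ act X g := by
  have : Quiver.Hom.op (show fobj m ⟶ fobj l from FintypeCat.homMk (g ∘ f))
      = Quiver.Hom.op (show fobj k ⟶ fobj l from FintypeCat.homMk g) ≫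
        Quiver.Hom.op (show fobj m ⟶ fobj k from FintypeCat.homMk f) := rfl
  rw [act, this, X.map_comp]
  rfl

lemma act_id (m : ℕ) : act X (id : Fin m → Fin m) = LinearMap.id := by
  have : Quiver.Hom.op (show fobj m ⟶ fobj m from FintypeCat.homMk id) = 𝟙 (op (fobj m)) := rfl
  rw [act, this, X.map_id]
  rfl

lemma pact_one_apply (m : ℕ) (x : MM X m) : pact X m 1 x = x := by
  rw [pact, Equiv.Perm.coe_one, act_id]
  rfl

lemma pact_mul_apply (m : ℕ) (t s : Equiv.Perm (Fin m)) (x : MM X m) :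
    pact X m (t * s) x = pact X m s (pact X m t x) := by
  rw [pact, Equiv.Perm.coe_mul, act_comp]
  rfl

lemma pfull_apply (m : ℕ) (x : MM X m) :
    pfull X m x = (m ! : R)⁻¹ • ∑ t : Equiv.Perm (Fin m), sgnR R t • pact X m t x := by
  simp [pfull, LinearMap.sum_apply]

lemma pfull_pact (m : ℕ) (s : Equiv.Perm (Fin m)) (x : MM X m) :
    pfull X m (pact X m s x) = sgnR R s • pfull X m x := by
  simp only [pfull_apply]
  rw [smul_comm (sgnR R s)]
  congr 1
  rw [Finset.smul_sum]
  refine Fintype.sum_equiv (Equiv.mulLeft s) _ _ fun t => ?_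
  rw [Equiv.coe_mulLeft, ← pact_mul_apply, smul_smul, sgnR_mul, ← mul_assoc, sgnR_mul_self,
    one_mul]

lemma pact_pfull (m : ℕ) (s : Equiv.Perm (Fin m)) (x : MM X m) :
    pact X m s (pfull X m x) = sgnR R s • pfull X m x := by
  simp only [pfull_apply, map_smul, map_sum]
  rw [smul_comm (sgnR R s)]
  congr 1
  rw [Finset.smul_sum]
  refine Fintype.sum_equiv (Equiv.mulRight s) _ _ fun t => ?_
  rw [Equiv.coe_mulRight, ← pact_mul_apply, smul_smul, sgnR_mul, mul_comm (sgnR R t),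
    ← mul_assoc, sgnR_mul_self, one_mul]

variable [CharZero R]

lemma factorial_smul_pfull (m : ℕ) (x : MM X m) :
    (m ! : R) • pfull X m x = ∑ t : Equiv.Perm (Fin m), sgnR R t • pact X m t x := by
  rw [pfull_apply, smul_smul, mul_inv_cancel₀ (factorial_cast_ne_zero R m), one_smul]

lemma pfull_idempotent (m : ℕ) : IsIdempotentElem (pfull X m) := by
  refine LinearMap.ext fun x => ?_
  rw [Module.End.mul_apply, pfull_apply X m (pfull X m x)]
  simp only [pact_pfull, smul_smul, sgnR_mul_self, one_smul, Finset.sum_const, Finset.card_univ,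
    Fintype.card_perm, Fintype.card_fin, ← Nat.cast_smul_eq_nsmul R]
  rw [inv_mul_cancel₀ (factorial_cast_ne_zero R m), one_smul]

lemma sub_pfull_mem_sDeg (m : ℕ) (x : MM X m) : x - pfull X m x ∈ sDeg X m := by
  have hx : (m ! : R) • (x - pfull X m x) =
      ∑ t : Equiv.Perm (Fin m), (x - sgnR R t • pact X m t x) := by
    rw [Finset.sum_sub_distrib, smul_sub, factorial_smul_pfull, Finset.sum_const,
      Finset.card_univ, Fintype.card_perm, Fintype.card_fin, Nat.cast_smul_eq_nsmul]
  rw [← inv_smul_smul₀ (factorial_cast_ne_zero R m) (x - pfull X m x), hx]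
  exact Submodule.smul_mem _ _ (Submodule.sum_mem _ fun t _ => Submodule.subset_span ⟨x, t, rfl⟩)

lemma ker_pfull (m : ℕ) : LinearMap.ker (pfull X m) = sDeg X m := by
  refine le_antisymm (fun x hx => ?_) (Submodule.span_le.mpr ?_)
  · simpa [LinearMap.mem_ker.mp hx] using sub_pfull_mem_sDeg X m x
  · rintro _ ⟨x, t, rfl⟩
    simp only [SetLike.mem_coe, LinearMap.mem_ker, map_sub, map_smul, pfull_pact, smul_smul,
      sgnR_mul_self, one_smul, sub_self]

lemma range_pfull (m : ℕ) : LinearMap.range (pfull X m) = Psub X m := by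
  refine le_antisymm ?_ (Submodule.span_le.mpr ?_)
  · rintro _ ⟨x, rfl⟩
    rw [pfull_apply]
    exact Submodule.smul_mem _ _ (Submodule.subset_span ⟨x, rfl⟩)
  · rintro _ ⟨x, rfl⟩
    exact ⟨(m ! : R) • x, by rw [map_smul, factorial_smul_pfull]⟩

lemma pfull_eq_self_of_mem_Psub (m : ℕ) (x : MM X m) (hx : x ∈ Psub X m) : pfull X m x = x :=
  (LinearMap.IsIdempotentElem.mem_range_iff (pfull_idempotent X m)).mp (range_pfull X m ▸ hx)

lemma isCompl_sDeg_Psub (m : ℕ) : IsCompl (sDeg X m) (Psub X m) := by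
  rw [← ker_pfull, ← range_pfull]
  exact (LinearMap.IsIdempotentElem.isCompl (pfull_idempotent X m)).symm

lemma pact_mem_sDeg (m : ℕ) (t : Equiv.Perm (Fin m)) (x : MM X m) (hx : x ∈ sDeg X m) :
    pact X m t x ∈ sDeg X m := by
  rw [← ker_pfull, LinearMap.mem_ker] at hx ⊢
  rw [pfull_pact, hx, smul_zero]

lemma pact_mem_Psub (m : ℕ) (t : Equiv.Perm (Fin m)) (x : MM X m) (hx : x ∈ Psub X m) :
    pact X m t x ∈ Psub X m := by
  rw [← pfull_eq_self_of_mem_Psub X m x hx, pact_pfull, ← range_pfull]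
  exact Submodule.smul_mem _ _ (LinearMap.mem_range_self _ x)

end Projection

section Faces

lemma swap_comp_succAbove_castSucc {n : ℕ} (j : Fin n) :
    Equiv.swap j.castSucc j.succ ∘ Fin.succAbove j.castSucc = Fin.succAbove j.succ := by
  funext k
  simp only [Function.comp_apply, Equiv.swap_apply_def, Fin.succAbove, Fin.ext_iff, Fin.lt_def,
    Fin.val_castSucc, Fin.val_succ]
  split_ifs <;> simp only [Fin.val_castSucc, Fin.val_succ] at * <;> omega

lemma swap_comp_succAbove_succ {n : ℕ} (j : Fin n) :
    Equiv.swap j.castSucc j.succ ∘ Fin.succAbove j.succ = Fin.succAbove j.castSucc := by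
  rw [← swap_comp_succAbove_castSucc, ← Function.comp_assoc, ← Equiv.Perm.coe_mul,
    Equiv.swap_mul_self, Equiv.Perm.coe_one, Function.id_comp]

lemma exists_swap_comp_succAbove {n : ℕ} {a b i : Fin (n + 1)} (hab : a ≠ b) (ha : a ≠ i)
    (hb : b ≠ i) :
    ∃ a' b' : Fin n, a' ≠ b' ∧ Equiv.swap a b ∘ i.succAbove = i.succAbove ∘ Equiv.swap a' b' := by
  obtain ⟨a', rfl⟩ := Fin.exists_succAbove_eq ha
  obtain ⟨b', rfl⟩ := Fin.exists_succAbove_eq hb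
  exact ⟨a', b', ne_of_apply_ne _ hab, Fin.succAbove_right_injective.swap_comp a' b'⟩

variable {R : Type} [Field R] (X : FintypeCatᵒᵖ ⥤ ModuleCat R)

lemma del_apply (n : ℕ) (x : MM X (n + 1)) :
    del X n x = ∑ i : Fin (n + 1), (-1 : R) ^ (i : ℕ) • face X n i x := by
  simp [del, LinearMap.sum_apply]

lemma face_pact (n : ℕ) (i : Fin (n + 1)) (s : Equiv.Perm (Fin (n + 1))) (x : MM X (n + 1)) :
    face X n i (pact X (n + 1) s x) = act X (s ∘ i.succAbove) x := by
  rw [act_comp]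
  rfl

lemma pfull_face_pact_swap_of_ne (n : ℕ) {a b i : Fin (n + 1)} (hab : a ≠ b) (ha : a ≠ i)
    (hb : b ≠ i) (x : MM X (n + 1)) :
    pfull X n (face X n i (pact X (n + 1) (Equiv.swap a b) x)) = -pfull X n (face X n i x) := by
  obtain ⟨a', b', hab', hcomm⟩ := exists_swap_comp_succAbove hab ha hb
  rw [face_pact, hcomm, act_comp]
  change pfull X n (pact X n (Equiv.swap a' b') (face X n i x)) = _
  rw [pfull_pact, sgnR_swap hab', neg_one_smul]

/-- Stated termwise, so that summing over `i` is a reindexing by the transposition. -/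
lemma neg_one_pow_smul_pfull_face_pact_swap (n : ℕ) (j : Fin n) (i : Fin (n + 1))
    (x : MM X (n + 1)) :
    (-1 : R) ^ (i : ℕ) • pfull X n (face X n i (pact X (n + 1) (Equiv.swap j.castSucc j.succ) x))
      = -((-1 : R) ^ (Equiv.swap j.castSucc j.succ i : ℕ) •
          pfull X n (face X n (Equiv.swap j.castSucc j.succ i) x)) := by
  rcases eq_or_ne i j.castSucc with rfl | h₁
  · rw [Equiv.swap_apply_left, face_pact, swap_comp_succAbove_castSucc, Fin.val_castSucc,
      Fin.val_succ, pow_succ, mul_neg_one, neg_smul, neg_neg]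
    rfl
  rcases eq_or_ne i j.succ with rfl | h₂
  · rw [Equiv.swap_apply_right, face_pact, swap_comp_succAbove_succ, Fin.val_castSucc,
      Fin.val_succ, pow_succ, mul_neg_one, neg_smul]
    rfl
  rw [Equiv.swap_apply_of_ne_of_ne h₁ h₂,
    pfull_face_pact_swap_of_ne X n (Fin.castSucc_lt_succ (i := j)).ne h₁.symm h₂.symm, smul_neg]

lemma pfull_del_pact_swap (n : ℕ) (j : Fin n) (x : MM X (n + 1)) :
    pfull X n (del X n (pact X (n + 1) (Equiv.swap j.castSucc j.succ) x))
      = -pfull X n (del X n x) := by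
  simp only [del_apply, map_sum, map_smul, neg_one_pow_smul_pfull_face_pact_swap,
    Finset.sum_neg_distrib]
  rw [Equiv.sum_comp (Equiv.swap j.castSucc j.succ)
    (fun i => (-1 : R) ^ (i : ℕ) • pfull X n (face X n i x))]

lemma pfull_del_pact (n : ℕ) (t : Equiv.Perm (Fin (n + 1))) (x : MM X (n + 1)) :
    pfull X n (del X n (pact X (n + 1) t x)) = sgnR R t • pfull X n (del X n x) := by
  have ht : t ∈ Submonoid.closure (Set.range fun j : Fin n => Equiv.swap j.castSucc j.succ) := by
    rw [Equiv.Perm.mclosure_swap_castSucc_succ]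
    trivial
  induction ht using Submonoid.closure_induction generalizing x with
  | mem _ h =>
    obtain ⟨j, rfl⟩ := h
    rw [pfull_del_pact_swap, sgnR_swap (Fin.castSucc_lt_succ (i := j)).ne, neg_one_smul]
  | one => rw [pact_one_apply, sgnR_one, one_smul]
  | mul a b _ _ ha hb => rw [pact_mul_apply, hb, ha, smul_smul, sgnR_mul, mul_comm]

variable [CharZero R]

lemma del_mem_sDeg (n : ℕ) (x : MM X (n + 1)) (hx : x ∈ sDeg X (n + 1)) :
    del X n x ∈ sDeg X n := by
  refine (Submodule.span_le (p := (sDeg X n).comap (del X n))).mpr ?_ hx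
  rintro _ ⟨y, t, rfl⟩
  rw [SetLike.mem_coe, Submodule.mem_comap, ← ker_pfull, LinearMap.mem_ker, map_sub, map_smul,
    map_sub, map_smul, pfull_del_pact, smul_smul, sgnR_mul_self, one_smul, sub_self]

end Faces

theorem stmt5 {R : Type} [Field R] [CharZero R] (X : FintypeCatᵒᵖ ⥤ ModuleCat R) :
    -- (i) `sDeg` is a subcomplex of `C_*X`
    (∀ (n : ℕ), ∀ x ∈ sDeg X (n + 1), del X n x ∈ sDeg X n) ∧
    -- (ii) `p_n^(n)` is idempotent, with kernel `sDeg` and range `P`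
    (∀ m : ℕ, (pfull X m) ∘ₗ (pfull X m) = pfull X m) ∧
    (∀ m : ℕ, LinearMap.ker (pfull X m) = sDeg X m) ∧
    (∀ m : ℕ, LinearMap.range (pfull X m) = Psub X m) ∧
    -- (iii) direct sum decomposition `C_nX = sDeg ⊕ P`, invariant under permutations
    (∀ m : ℕ, IsCompl (sDeg X m) (Psub X m)) ∧
    (∀ (m : ℕ) (t : Equiv.Perm (Fin m)), ∀ x ∈ sDeg X m, pact X m t x ∈ sDeg X m) ∧
    (∀ (m : ℕ) (t : Equiv.Perm (Fin m)), ∀ x ∈ Psub X m, pact X m t x ∈ Psub X m) ∧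
    -- the inclusion `P_*X ↪ C_*X` splits the short exact sequence
    -- `0 → sDeg_*X → C_*X → P_*X → 0` (whose surjection is `p_X`)
    (∀ m : ℕ, ∀ x ∈ Psub X m, pfull X m x = x) :=
  ⟨del_mem_sDeg X, pfull_idempotent X, ker_pfull X, range_pfull X, isCompl_sDeg_Psub X,
    pact_mem_sDeg X, pact_mem_Psub X, pfull_eq_self_of_mem_Psub X⟩
end

section
/- Let X be a cubical abelian group, i.e. a cubical ℤ-module with connections. Then the positive connection subcomplex posCon_*X of the cubical alternating face map complex C_*X is acyclic: all of its homology groups vanish. -/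
/-!
Filter `posCon_{n+1}` by the subgroups `F_p` generated by the images of `γ̄_1^0, …, γ̄_p^0`.
The face–connection identities give, for `1 ≤ j ≤ p + 1`,
`(∂ γ_{p+1}^0 + γ_{p+1}^0 ∂) (γ_j^0 z) ≡ (-1)^p γ_j^0 z` modulo `F_p` and degenerate cubes,
so `(-1)^p γ_{p+1}^0` contracts `F_{p+1}` onto `F_p` up to homotopy. Hence a cycle `x ∈ F_{p+1}`
differs from the boundary `(-1)^p ∂ γ̄_{p+1}^0 x` by a cycle of `F_p`, and induction on `p`
(with `F_0 = 0`) makes every cycle of `posCon` a boundary of an element of `posCon`.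
-/

/-- A cubical abelian group (cubical `ℤ`-module with connections): abelian groups `X n`
with faces `d n ε i : X (n+1) → X n` (meaningful for `1 ≤ i ≤ n+1`), degeneracies
`s n i : X n → X (n+1)` (for `1 ≤ i ≤ n+1`) and connections `γ n ε i : X n → X (n+1)`
(for `1 ≤ i ≤ n`), subject to the cubical identities (C1)–(C6). -/
structure CubicalAb where
  X : ℕ → Type
  [acg : ∀ n, AddCommGroup (X n)]
  d : ∀ n : ℕ, Fin 2 → ℕ → (X (n + 1) →+ X n)
  s : ∀ n : ℕ, ℕ → (X n →+ X (n + 1))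
  γ : ∀ n : ℕ, Fin 2 → ℕ → (X n →+ X (n + 1))
  C1 : ∀ (n : ℕ) (ε η : Fin 2) (i j : ℕ), 1 ≤ j → j ≤ i → i ≤ n + 1 →
    (d n ε i).comp (d (n + 1) η j) = (d n η j).comp (d (n + 1) ε (i + 1))
  C2a : ∀ (n : ℕ) (ε : Fin 2) (i j : ℕ), 1 ≤ j → j < i → i ≤ n + 2 →
    (d (n + 1) ε i).comp (s (n + 1) j) = (s n j).comp (d n ε (i - 1))
  C2b : ∀ (n : ℕ) (ε : Fin 2) (i : ℕ), 1 ≤ i → i ≤ n + 2 →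
    (d (n + 1) ε i).comp (s (n + 1) i) = AddMonoidHom.id _
  C2c : ∀ (n : ℕ) (ε : Fin 2) (i j : ℕ), 1 ≤ i → i < j → j ≤ n + 2 →
    (d (n + 1) ε i).comp (s (n + 1) j) = (s n (j - 1)).comp (d n ε i)
  C3 : ∀ (n i j : ℕ), 1 ≤ j → j ≤ i → i ≤ n + 1 →
    (s (n + 1) j).comp (s n i) = (s (n + 1) (i + 1)).comp (s n j)
  C4a : ∀ (n : ℕ) (ε η : Fin 2) (i j : ℕ), 1 ≤ j → j < i → i ≤ n →
    (γ (n + 1) ε j).comp (γ n η i) = (γ (n + 1) η (i + 1)).comp (γ n ε j)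
  C4b : ∀ (n : ℕ) (ε : Fin 2) (i : ℕ), 1 ≤ i → i ≤ n →
    (γ (n + 1) ε i).comp (γ n ε i) = (γ (n + 1) ε (i + 1)).comp (γ n ε i)
  C5a : ∀ (n : ℕ) (ε η : Fin 2) (i j : ℕ), 1 ≤ j → j + 1 < i → i ≤ n + 2 →
    (d (n + 1) ε i).comp (γ (n + 1) η j) = (γ n η j).comp (d n ε (i - 1))
  C5b : ∀ (n : ℕ) (ε : Fin 2) (j : ℕ), 1 ≤ j → j ≤ n + 1 →
    (d (n + 1) ε j).comp (γ (n + 1) ε j) = AddMonoidHom.id _ ∧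
      (d (n + 1) ε (j + 1)).comp (γ (n + 1) ε j) = AddMonoidHom.id _
  C5c : ∀ (n : ℕ) (ε : Fin 2) (j : ℕ), 1 ≤ j → j ≤ n + 1 →
    (d (n + 1) ε j).comp (γ (n + 1) (1 - ε) j) = (s n j).comp (d n ε j) ∧
      (d (n + 1) ε (j + 1)).comp (γ (n + 1) (1 - ε) j) = (s n j).comp (d n ε j)
  C5d : ∀ (n : ℕ) (ε η : Fin 2) (i j : ℕ), 1 ≤ i → i < j → j ≤ n + 1 →
    (d (n + 1) ε i).comp (γ (n + 1) η j) = (γ n η (j - 1)).comp (d n ε i)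
  C6a : ∀ (n : ℕ) (ε : Fin 2) (i j : ℕ), 1 ≤ j → j < i → i ≤ n + 1 →
    (γ (n + 1) ε i).comp (s n j) = (s (n + 1) j).comp (γ n ε (i - 1))
  C6b : ∀ (n : ℕ) (ε : Fin 2) (i : ℕ), 1 ≤ i → i ≤ n + 1 →
    (γ (n + 1) ε i).comp (s n i) = (s (n + 1) i).comp (s n i)
  C6c : ∀ (n : ℕ) (ε : Fin 2) (i j : ℕ), 1 ≤ i → i < j → j ≤ n + 1 →
    (γ (n + 1) ε i).comp (s n j) = (s (n + 1) (j + 1)).comp (γ n ε i)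

attribute [instance] CubicalAb.acg

/-- The subgroup of degenerate elements, generated by the images of the degeneracies. -/
def CubicalAb.cDeg (Y : CubicalAb) : ∀ n : ℕ, AddSubgroup (Y.X n)
  | 0 => ⊥
  | (n + 1) => ⨆ i ∈ Finset.Icc 1 (n + 1), AddMonoidHom.range (Y.s n i)

/-- The chain group `C_nX = X_n / cDeg_n(X)`. -/
abbrev CubicalAb.CC (Y : CubicalAb) (n : ℕ) := Y.X n ⧸ Y.cDeg n

/-- The alternating face map `∂_{n+1} = ∑_{i=1}^{n+1} (-1)^{i-1} (d_i^0 - d_i^1)`. -/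
def CubicalAb.δ (Y : CubicalAb) (n : ℕ) : Y.X (n + 1) →+ Y.X n :=
  ∑ i ∈ Finset.Icc 1 (n + 1), ((-1 : ℤ) ^ (i - 1)) • (Y.d n 0 i - Y.d n 1 i)

open Finset

theorem sum_neg_one_pow_smul_eq_zero_of_symm {M : Type*} [AddCommGroup M] (N : ℕ)
    (f : ℕ → ℕ → M) (hf : ∀ i j, 1 ≤ j → j ≤ i → i ≤ N → f i j = f j (i + 1)) :
    ∑ p ∈ Icc 1 N ×ˢ Icc 1 (N + 1), ((-1 : ℤ) ^ (p.1 + p.2)) • f p.1 p.2 = 0 := by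
  refine sum_involution (fun p _ => if p.2 ≤ p.1 then (p.2, p.1 + 1) else (p.2 - 1, p.1))
    (fun ⟨i, j⟩ hp => ?_) (fun ⟨i, j⟩ hp _ => ?_) (fun ⟨i, j⟩ hp => ?_) (fun ⟨i, j⟩ hp => ?_)
  all_goals simp only [mem_product, mem_Icc] at hp
  · dsimp only
    split_ifs with hji
    · rw [hf i j hp.2.1 hji hp.1.2, ← add_smul, show j + (i + 1) = i + j + 1 by omega, pow_succ]
      simp
    · obtain ⟨k, rfl⟩ : ∃ k, j = k + 1 := ⟨j - 1, by omega⟩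
      rw [Nat.add_sub_cancel, hf k i hp.1.1 (by omega) (by omega), ← add_smul,
        show i + (k + 1) = k + i + 1 by omega, pow_succ]
      simp
  · dsimp only
    split_ifs <;> simp only [ne_eq, Prod.mk.injEq] <;> omega
  · split_ifs <;> simp only [mem_product, mem_Icc] <;> omega
  · by_cases hji : j ≤ i
    · simp [hji, show ¬ i + 1 ≤ j by omega]
    · obtain ⟨k, rfl⟩ : ∃ k, j = k + 1 := ⟨j - 1, by omega⟩
      simp [hji, show i ≤ k by omega]

theorem exists_boundary_of_filtered_contraction {A B C : Type*} [AddCommGroup A]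
    [AddCommGroup B] [AddCommGroup C] (f : A →+ B) (g : B →+ C) (hgf : ∀ a, g (f a) = 0)
    (F : ℕ → AddSubgroup B) (hF : F 0 = ⊥) (G : AddSubgroup A) (N : ℕ) (h : ℕ → B → A)
    (hG : ∀ p < N, ∀ b, h p b ∈ G)
    (hstep : ∀ p < N, ∀ b ∈ F (p + 1), g b = 0 → b - f (h p b) ∈ F p) :
    ∀ p ≤ N, ∀ b ∈ F p, g b = 0 → ∃ a ∈ G, f a = b := by
  intro p
  induction p with
  | zero =>
    intro _ b hb _
    rw [hF, AddSubgroup.mem_bot] at hb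
    exact ⟨0, zero_mem G, by rw [hb, map_zero]⟩
  | succ p ih =>
    intro hp b hb hgb
    obtain ⟨a, ha, hfa⟩ := ih (by omega) _ (hstep p hp b hb hgb)
      (by rw [map_sub, hgb, hgf, sub_zero])
    exact ⟨h p b + a, add_mem (hG p hp b) ha, by rw [map_add, hfa, add_sub_cancel]⟩

namespace CubicalAb

variable (Y : CubicalAb)

def faceDiff (n i : ℕ) : Y.X (n + 1) →+ Y.X n := Y.d n 0 i - Y.d n 1 i

def faceSum (n a b : ℕ) : Y.X (n + 1) →+ Y.X n :=
  ∑ i ∈ Ioc a b, ((-1 : ℤ) ^ (i - 1)) • Y.faceDiff n i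

lemma faceSum_apply (n a b : ℕ) (x : Y.X (n + 1)) :
    Y.faceSum n a b x = ∑ i ∈ Ioc a b, ((-1 : ℤ) ^ (i - 1)) • Y.faceDiff n i x := by
  simp only [faceSum, AddMonoidHom.finsetSum_apply, AddMonoidHom.smul_apply]

lemma δ_eq_faceSum (n : ℕ) : Y.δ n = Y.faceSum n 0 (n + 1) := by
  rw [δ, faceSum, ← Icc_add_one_left_eq_Ioc, zero_add]
  rfl

lemma faceSum_add_faceSum {n a b c : ℕ} (hab : a ≤ b) (hbc : b ≤ c) :
    Y.faceSum n a b + Y.faceSum n b c = Y.faceSum n a c :=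
  sum_Ioc_consecutive _ hab hbc

lemma faceSum_self (n a : ℕ) : Y.faceSum n a a = 0 := by
  rw [faceSum, Ioc_self, sum_empty]

lemma faceSum_succ_self (n a : ℕ) :
    Y.faceSum n a (a + 1) = ((-1 : ℤ) ^ a) • Y.faceDiff n (a + 1) := by
  rw [faceSum, Nat.Ioc_succ_singleton, sum_singleton, Nat.add_sub_cancel]

lemma faceDiff_faceDiff {n i j : ℕ} (hj : 1 ≤ j) (hji : j ≤ i) (hi : i ≤ n + 1)
    (x : Y.X (n + 2)) :
    Y.faceDiff n i (Y.faceDiff (n + 1) j x) = Y.faceDiff n j (Y.faceDiff (n + 1) (i + 1) x) := by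
  have h (ε η : Fin 2) := DFunLike.congr_fun (Y.C1 n ε η i j hj hji hi) x
  simp only [AddMonoidHom.comp_apply] at h
  simp only [faceDiff, AddMonoidHom.sub_apply, map_sub, h]
  abel

theorem δ_δ (n : ℕ) (x : Y.X (n + 2)) : Y.δ n (Y.δ (n + 1) x) = 0 := by
  have hsign : ∀ i ∈ Icc 1 (n + 1), ∀ j ∈ Icc 1 (n + 2),
      ((-1 : ℤ) ^ (i - 1) * (-1) ^ (j - 1)) = (-1) ^ (i + j) := by
    intro i hi j hj
    obtain ⟨k, rfl⟩ : ∃ k, i = k + 1 := ⟨i - 1, by simp at hi; omega⟩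
    obtain ⟨l, rfl⟩ : ∃ l, j = l + 1 := ⟨j - 1, by simp at hj; omega⟩
    simp only [Nat.add_sub_cancel, ← pow_add]
    rw [show k + 1 + (l + 1) = k + l + 2 by omega, pow_add _ (k + l) 2]
    simp
  calc Y.δ n (Y.δ (n + 1) x)
      = ∑ p ∈ Icc 1 (n + 1) ×ˢ Icc 1 (n + 2),
          ((-1 : ℤ) ^ (p.1 + p.2)) • Y.faceDiff n p.1 (Y.faceDiff (n + 1) p.2 x) := by
        simp only [δ, faceDiff, AddMonoidHom.finsetSum_apply, AddMonoidHom.smul_apply, map_sum,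
          map_zsmul, smul_sum, smul_smul, sum_product_right]
        refine sum_congr rfl fun j hj => sum_congr rfl fun i hi => ?_
        rw [mul_comm, hsign i hi j hj]
    _ = 0 := sum_neg_one_pow_smul_eq_zero_of_symm (n + 1) _
        fun i j hj hji hi => Y.faceDiff_faceDiff hj hji hi x

lemma faceDiff_γ_of_lt {n i j : ℕ} (hi : 1 ≤ i) (hij : i < j) (hj : j ≤ n + 1)
    (x : Y.X (n + 1)) :
    Y.faceDiff (n + 1) i (Y.γ (n + 1) 0 j x) = Y.γ n 0 (j - 1) (Y.faceDiff n i x) := by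
  have h (ε : Fin 2) := DFunLike.congr_fun (Y.C5d n ε 0 i j hi hij hj) x
  simp only [AddMonoidHom.comp_apply] at h
  simp only [faceDiff, AddMonoidHom.sub_apply, map_sub, h]

lemma faceDiff_γ_of_gt {n i j : ℕ} (hj : 1 ≤ j) (hji : j + 1 < i) (hi : i ≤ n + 2)
    (x : Y.X (n + 1)) :
    Y.faceDiff (n + 1) i (Y.γ (n + 1) 0 j x) = Y.γ n 0 j (Y.faceDiff n (i - 1) x) := by
  have h (ε : Fin 2) := DFunLike.congr_fun (Y.C5a n ε 0 i j hj hji hi) x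
  simp only [AddMonoidHom.comp_apply] at h
  simp only [faceDiff, AddMonoidHom.sub_apply, map_sub, h]

lemma faceDiff_γ_self {n j : ℕ} (hj : 1 ≤ j) (hjn : j ≤ n + 1) (x : Y.X (n + 1)) :
    Y.faceDiff (n + 1) j (Y.γ (n + 1) 0 j x) = x - Y.s n j (Y.d n 1 j x) ∧
      Y.faceDiff (n + 1) (j + 1) (Y.γ (n + 1) 0 j x) = x - Y.s n j (Y.d n 1 j x) := by
  obtain ⟨h₀, h₀'⟩ := Y.C5b n 0 j hj hjn
  obtain ⟨h₁, h₁'⟩ := Y.C5c n 1 j hj hjn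
  rw [sub_self] at h₁ h₁'
  rw [AddMonoidHom.ext_iff] at h₀ h₀' h₁ h₁'
  simp only [AddMonoidHom.comp_apply, AddMonoidHom.id_apply] at h₀ h₀' h₁ h₁'
  simp only [faceDiff, AddMonoidHom.sub_apply, h₀, h₀', h₁, h₁', and_self]

lemma faceSum_γ_of_le {n a b j : ℕ} (hbj : b ≤ j) (hj : j ≤ n) (x : Y.X (n + 1)) :
    Y.faceSum (n + 1) a b (Y.γ (n + 1) 0 (j + 1) x) = Y.γ n 0 j (Y.faceSum n a b x) := by
  simp only [faceSum_apply, map_sum, map_zsmul]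
  refine sum_congr rfl fun i hi => ?_
  rw [mem_Ioc] at hi
  rw [Y.faceDiff_γ_of_lt (by omega) (by omega) (by omega), Nat.add_sub_cancel]

lemma faceSum_γ_of_ge {n a b j : ℕ} (hj : 1 ≤ j) (hja : j ≤ a) (hb : b ≤ n + 1)
    (x : Y.X (n + 1)) :
    Y.faceSum (n + 1) (a + 1) (b + 1) (Y.γ (n + 1) 0 j x) = -Y.γ n 0 j (Y.faceSum n a b x) := by
  simp only [faceSum_apply, map_sum, map_zsmul, ← sum_neg_distrib, ← map_add_right_Ioc,
    sum_map, addRightEmbedding_apply]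
  refine sum_congr rfl fun i hi => ?_
  rw [mem_Ioc] at hi
  obtain ⟨k, rfl⟩ : ∃ k, i = k + 1 := ⟨i - 1, by omega⟩
  rw [Y.faceDiff_γ_of_gt hj (by omega) (by omega)]
  simp only [Nat.add_sub_cancel, pow_succ, mul_neg_one, neg_smul]

lemma faceSum_γ_eq_zero {n j : ℕ} (hj : j ≤ n) (x : Y.X (n + 1)) :
    Y.faceSum (n + 1) j (j + 2) (Y.γ (n + 1) 0 (j + 1) x) = 0 := by
  obtain ⟨h, h'⟩ := Y.faceDiff_γ_self (j := j + 1) (by omega) (by omega) x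
  rw [← Y.faceSum_add_faceSum (Nat.le_succ j) (Nat.le_succ _), faceSum_succ_self,
    faceSum_succ_self, AddMonoidHom.add_apply, AddMonoidHom.smul_apply,
    AddMonoidHom.smul_apply, h, h', pow_succ, mul_neg_one, neg_smul, add_neg_cancel]

lemma δ_γ_add_γ_δ {n r : ℕ} (hr : r ≤ n) (x : Y.X (n + 1)) :
    Y.δ (n + 1) (Y.γ (n + 1) 0 (r + 1) x) + Y.γ n 0 (r + 1) (Y.δ n x) =
      Y.γ n 0 r (Y.faceSum n 0 r x) + Y.γ n 0 (r + 1) (Y.faceSum n 0 (r + 1) x) := by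
  rw [δ_eq_faceSum, δ_eq_faceSum,
    ← Y.faceSum_add_faceSum (b := r) (by omega) (by omega),
    ← Y.faceSum_add_faceSum (a := r) (b := r + 2) (by omega) (by omega),
    ← Y.faceSum_add_faceSum (b := r + 1) (c := n + 1) (by omega) (by omega)]
  simp only [AddMonoidHom.add_apply, map_add, Y.faceSum_γ_of_le le_rfl hr,
    Y.faceSum_γ_eq_zero hr, Y.faceSum_γ_of_ge (j := r + 1) (by omega) le_rfl le_rfl]
  abel

lemma faceSum_γ_succ_self {n r : ℕ} (hr : r ≤ n) (x : Y.X (n + 1)) :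
    Y.faceSum (n + 1) 0 (r + 1) (Y.γ (n + 1) 0 (r + 1) x) =
      Y.γ n 0 r (Y.faceSum n 0 r x) + ((-1 : ℤ) ^ r) • (x - Y.s n (r + 1) (Y.d n 1 (r + 1) x)) := by
  rw [← Y.faceSum_add_faceSum (b := r) (by omega) le_self_add, faceSum_succ_self,
    AddMonoidHom.add_apply, AddMonoidHom.smul_apply, Y.faceSum_γ_of_le le_rfl hr,
    (Y.faceDiff_γ_self (by omega) (by omega) x).1]

lemma faceSum_γ_of_lt {n k r : ℕ} (hkr : k < r) (hr : r ≤ n) (x : Y.X (n + 1)) :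
    Y.faceSum (n + 1) 0 (r + 1) (Y.γ (n + 1) 0 (k + 1) x) =
      Y.γ n 0 k (Y.faceSum n 0 k x) - Y.γ n 0 (k + 1) (Y.faceSum n (k + 1) r x) := by
  rw [← Y.faceSum_add_faceSum (n := n + 1) (a := 0) (b := k) (c := r + 1) (by omega) (by omega),
    ← Y.faceSum_add_faceSum (n := n + 1) (a := k) (b := k + 1 + 1) (c := r + 1) (by omega)
      (by omega)]
  simp only [AddMonoidHom.add_apply, Y.faceSum_γ_of_le le_rfl (hkr.le.trans hr),
    Y.faceSum_γ_eq_zero (hkr.le.trans hr),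
    Y.faceSum_γ_of_ge (n := n) (j := k + 1) (a := k + 1) (b := r) (by omega) le_rfl (by omega)]
  abel

lemma s_mem_cDeg {n i : ℕ} (hi : 1 ≤ i) (hin : i ≤ n + 1) (x : Y.X n) :
    Y.s n i x ∈ Y.cDeg (n + 1) :=
  AddSubgroup.mem_iSup_of_mem i <| AddSubgroup.mem_iSup_of_mem (mem_Icc.2 ⟨hi, hin⟩) ⟨x, rfl⟩

def posConFiltration (n r : ℕ) : AddSubgroup (Y.X (n + 1)) :=
  ⨆ i ∈ Icc 1 r, (Y.γ n 0 i).range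

lemma γ_mem_posConFiltration {n r i : ℕ} (hi : 1 ≤ i) (hir : i ≤ r) (x : Y.X n) :
    Y.γ n 0 i x ∈ Y.posConFiltration n r :=
  AddSubgroup.mem_iSup_of_mem i <| AddSubgroup.mem_iSup_of_mem (mem_Icc.2 ⟨hi, hir⟩) ⟨x, rfl⟩

lemma γ_faceSum_mem_posConFiltration (n r : ℕ) (x : Y.X (n + 1)) :
    Y.γ n 0 r (Y.faceSum n 0 r x) ∈ Y.posConFiltration n r := by
  rcases Nat.eq_zero_or_pos r with rfl | hr
  · simp [faceSum_self]
  · exact Y.γ_mem_posConFiltration hr le_rfl _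

lemma γ_γ_mem_posConFiltration {n k r : ℕ} (hk : 1 ≤ k) (hkr : k ≤ r) (hr : r ≤ n) (x : Y.X n) :
    Y.γ (n + 1) 0 (r + 1) (Y.γ n 0 k x) ∈ Y.posConFiltration (n + 1) r := by
  rcases hkr.lt_or_eq with hkr | rfl
  · rw [← AddMonoidHom.comp_apply, ← Y.C4a n 0 0 r k hk hkr hr]
    exact Y.γ_mem_posConFiltration hk hkr.le _
  · rw [← AddMonoidHom.comp_apply, ← Y.C4b n 0 k hk hr]
    exact Y.γ_mem_posConFiltration hk le_rfl _

lemma γ_γ_faceSum_mem_posConFiltration {n k r : ℕ} (hkr : k ≤ r) (hr : r ≤ n)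
    (x : Y.X (n + 1)) :
    Y.γ (n + 1) 0 (r + 1) (Y.γ n 0 k (Y.faceSum n 0 k x)) ∈ Y.posConFiltration (n + 1) r := by
  rcases Nat.eq_zero_or_pos k with rfl | hk
  · simp [faceSum_self]
  · exact Y.γ_γ_mem_posConFiltration hk hkr hr _

lemma δ_γ_add_γ_δ_sub_mem {m r j : ℕ} (hj : 1 ≤ j) (hjr : j ≤ r + 1) (hr : r ≤ m)
    (z : Y.X (m + 1)) :
    Y.δ (m + 2) (Y.γ (m + 2) 0 (r + 1) (Y.γ (m + 1) 0 j z))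
        + Y.γ (m + 1) 0 (r + 1) (Y.δ (m + 1) (Y.γ (m + 1) 0 j z))
        - ((-1 : ℤ) ^ r) • Y.γ (m + 1) 0 j z ∈ Y.posConFiltration (m + 1) r ⊔ Y.cDeg (m + 2) := by
  rw [Y.δ_γ_add_γ_δ (by omega : r ≤ m + 1), add_sub_assoc]
  refine add_mem (AddSubgroup.mem_sup_left (Y.γ_faceSum_mem_posConFiltration _ _ _)) ?_
  rcases hjr.lt_or_eq with hjr | rfl
  · obtain ⟨k, rfl⟩ : ∃ k, j = k + 1 := ⟨j - 1, by omega⟩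
    rw [Y.faceSum_γ_of_lt (by omega) hr, map_sub]
    refine AddSubgroup.mem_sup_left (sub_mem (sub_mem ?_ ?_) (zsmul_mem ?_ _))
    · exact Y.γ_γ_faceSum_mem_posConFiltration (by omega) hr _
    · exact Y.γ_γ_mem_posConFiltration (by omega) (by omega) hr _
    · exact Y.γ_mem_posConFiltration (by omega) (by omega) _
  · have hγs : Y.γ (m + 1) 0 (r + 1) (Y.s m (r + 1) (Y.d m 1 (r + 1) z)) =
        Y.s (m + 1) (r + 1) (Y.s m (r + 1) (Y.d m 1 (r + 1) z)) := by
      rw [← AddMonoidHom.comp_apply, Y.C6b m 0 (r + 1) (by omega) (by omega),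
        AddMonoidHom.comp_apply]
    rw [Y.faceSum_γ_succ_self hr, map_add, map_zsmul, map_sub, hγs, smul_sub,
      add_sub_assoc, sub_sub_cancel_left]
    refine add_mem (AddSubgroup.mem_sup_left ?_) (neg_mem (zsmul_mem ?_ _))
    · exact Y.γ_γ_faceSum_mem_posConFiltration le_rfl hr _
    · exact AddSubgroup.mem_sup_right (Y.s_mem_cDeg (by omega) (by omega) _)

lemma posConFiltration_succ_le_comap {m r : ℕ} (hr : r ≤ m) :
    Y.posConFiltration (m + 1) (r + 1) ≤ (Y.posConFiltration (m + 1) r ⊔ Y.cDeg (m + 2)).comap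
      (AddMonoidHom.id _ - ((-1 : ℤ) ^ r) • ((Y.δ (m + 2)).comp (Y.γ (m + 2) 0 (r + 1)) +
        (Y.γ (m + 1) 0 (r + 1)).comp (Y.δ (m + 1)))) := by
  refine iSup₂_le fun j hj => ?_
  rintro _ ⟨z, rfl⟩
  rw [mem_Icc] at hj
  have hsq : ∀ v : Y.X (m + 2), ((-1 : ℤ) ^ r) • ((-1 : ℤ) ^ r) • v = v := fun v => by
    rw [smul_smul, ← pow_add, Even.neg_one_pow ⟨r, rfl⟩, one_smul]
  have h := neg_mem (zsmul_mem (Y.δ_γ_add_γ_δ_sub_mem hj.1 hj.2 hr z) ((-1 : ℤ) ^ r))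
  rw [smul_sub, hsq, neg_sub] at h
  simpa only [AddSubgroup.mem_comap, AddMonoidHom.sub_apply, AddMonoidHom.id_apply,
    AddMonoidHom.smul_apply, AddMonoidHom.add_apply, AddMonoidHom.comp_apply] using h

lemma map_mk'_posConFiltration {n p : ℕ} {γQ : ℕ → (Y.CC n →+ Y.CC (n + 1))}
    (hγQ : ∀ i : ℕ, 1 ≤ i → i ≤ n →
      (γQ i).comp (QuotientAddGroup.mk' (Y.cDeg n)) =
        (QuotientAddGroup.mk' (Y.cDeg (n + 1))).comp (Y.γ n 0 i))
    (hp : p ≤ n) :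
    (Y.posConFiltration n p).map (QuotientAddGroup.mk' (Y.cDeg (n + 1))) =
      ⨆ i ∈ Icc 1 p, (γQ i).range := by
  simp only [posConFiltration, AddSubgroup.map_iSup, AddMonoidHom.map_range]
  refine biSup_congr fun i hi => ?_
  rw [mem_Icc] at hi
  rw [← hγQ i hi.1 (hi.2.trans hp), AddMonoidHom.range_comp,
    AddMonoidHom.range_eq_top.2 (QuotientAddGroup.mk'_surjective _), ← AddMonoidHom.range_eq_map]

lemma delQ_delQ {delQ : ∀ n : ℕ, Y.CC (n + 1) →+ Y.CC n}
    (hdelQ : ∀ n : ℕ, (delQ n).comp (QuotientAddGroup.mk' (Y.cDeg (n + 1))) =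
      (QuotientAddGroup.mk' (Y.cDeg n)).comp (Y.δ n))
    (n : ℕ) (w : Y.CC (n + 2)) : delQ n (delQ (n + 1) w) = 0 := by
  obtain ⟨x, rfl⟩ := QuotientAddGroup.mk'_surjective _ w
  have e (n : ℕ) := DFunLike.congr_fun (hdelQ n)
  simp only [AddMonoidHom.comp_apply] at e
  rw [e, e, δ_δ, map_zero]

lemma sub_homotopy_mem {γQ : ∀ n : ℕ, ℕ → (Y.CC n →+ Y.CC (n + 1))}
    (hγQ : ∀ n i : ℕ, 1 ≤ i → i ≤ n →
      (γQ n i).comp (QuotientAddGroup.mk' (Y.cDeg n)) =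
        (QuotientAddGroup.mk' (Y.cDeg (n + 1))).comp (Y.γ n 0 i))
    {delQ : ∀ n : ℕ, Y.CC (n + 1) →+ Y.CC n}
    (hdelQ : ∀ n : ℕ, (delQ n).comp (QuotientAddGroup.mk' (Y.cDeg (n + 1))) =
      (QuotientAddGroup.mk' (Y.cDeg n)).comp (Y.δ n))
    {m p : ℕ} (hp : p ≤ m) {b : Y.CC (m + 2)}
    (hb : b ∈ ⨆ i ∈ Icc 1 (p + 1), (γQ (m + 1) i).range) :
    b - ((-1 : ℤ) ^ p) • (delQ (m + 2) (γQ (m + 2) (p + 1) b) + γQ (m + 1) (p + 1) (delQ (m + 1) b))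
      ∈ ⨆ i ∈ Icc 1 p, (γQ (m + 1) i).range := by
  rw [← Y.map_mk'_posConFiltration (hγQ (m + 1)) (by omega)] at hb ⊢
  obtain ⟨w, hw, rfl⟩ := hb
  have h := AddSubgroup.mem_map_of_mem (QuotientAddGroup.mk' (Y.cDeg (m + 2)))
    (AddSubgroup.mem_comap.1 (Y.posConFiltration_succ_le_comap hp hw))
  rw [AddSubgroup.map_sup, QuotientAddGroup.map_mk'_self, sup_bot_eq] at h
  have eγ := DFunLike.congr_fun (hγQ (m + 2) (p + 1) (by omega) (by omega))
  have eγ' := DFunLike.congr_fun (hγQ (m + 1) (p + 1) (by omega) (by omega))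
  have eδ (n : ℕ) := DFunLike.congr_fun (hdelQ n)
  simp only [AddMonoidHom.comp_apply] at eγ eγ' eδ
  simpa only [AddMonoidHom.sub_apply, AddMonoidHom.id_apply, AddMonoidHom.smul_apply,
    AddMonoidHom.add_apply, AddMonoidHom.comp_apply, map_sub, map_zsmul, map_add, eγ, eγ', eδ]
    using h

end CubicalAb

/-- for a cubical abelian group, the positive connection subcomplex
`posCon_*X` of the cubical alternating face map complex is acyclic (here
`posCon_{n+1}X = ⨆_{1 ≤ i ≤ n} range γ̄_i^0` and `posCon_0X = ⊥`). -/
theorem stmt12 (Y : CubicalAb)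
    -- the maps induced on the quotients by the positive connections `γ_i^0`
    (γQ : ∀ n : ℕ, ℕ → (Y.CC n →+ Y.CC (n + 1)))
    (hγQ : ∀ n i : ℕ, 1 ≤ i → i ≤ n →
      (γQ n i).comp (QuotientAddGroup.mk' (Y.cDeg n)) =
        (QuotientAddGroup.mk' (Y.cDeg (n + 1))).comp (Y.γ n 0 i))
    -- the differential of the cubical alternating face map complex
    (delQ : ∀ n : ℕ, Y.CC (n + 1) →+ Y.CC n)
    (hdelQ : ∀ n : ℕ, (delQ n).comp (QuotientAddGroup.mk' (Y.cDeg (n + 1))) =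
      (QuotientAddGroup.mk' (Y.cDeg n)).comp (Y.δ n)) :
    -- every cycle of the positive connection subcomplex is a boundary of an element of it
    (∀ x ∈ (⊥ : AddSubgroup (Y.CC 0)),
      ∃ y ∈ ⨆ i ∈ Finset.Icc 1 0, AddMonoidHom.range (γQ 0 i), delQ 0 y = x) ∧
    (∀ n : ℕ, ∀ x ∈ ⨆ i ∈ Finset.Icc 1 n, AddMonoidHom.range (γQ n i), delQ n x = 0 →
      ∃ y ∈ ⨆ i ∈ Finset.Icc 1 (n + 1), AddMonoidHom.range (γQ (n + 1) i),
        delQ (n + 1) y = x) := by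
  refine ⟨fun x hx => ⟨0, zero_mem _, by rw [map_zero, AddSubgroup.mem_bot.1 hx]⟩, fun n => ?_⟩
  refine exists_boundary_of_filtered_contraction (delQ (n + 1)) (delQ n) (Y.delQ_delQ hdelQ n)
    (fun p => ⨆ i ∈ Icc 1 p, (γQ n i).range) (by simp) _ n
    (fun p b => ((-1 : ℤ) ^ p) • γQ (n + 1) (p + 1) b) (fun p hp b => ?_)
    (fun p hp b hb hgb => ?_) n le_rfl
  · exact zsmul_mem (AddSubgroup.mem_iSup_of_mem (p + 1) <|
      AddSubgroup.mem_iSup_of_mem (mem_Icc.2 ⟨by omega, by omega⟩)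
        (AddMonoidHom.mem_range.2 ⟨b, rfl⟩)) _
  · obtain ⟨m, rfl⟩ : ∃ m, n = m + 1 := ⟨n - 1, by omega⟩
    simpa only [hgb, map_zero, add_zero, map_zsmul] using
      Y.sub_homotopy_mem hγQ hdelQ (by omega) hb
end
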